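/- arXiv:2412.09984 — 3 statements merged into one kernel-verified Lean document; each statement's English description precedes it below -/
import Mathlib

section
/- Let n ≥ 1 and let P_0, ..., P_{n-2} be functions where each P_i takes i+2 arguments from Fin (2^n) and returns a Boolean. Then there exist bits b_0, ..., b_{n-2} ∈ Bool and pairwise distinct elements a_0, ..., a_n ∈ Fin (2^n) such that for all i < j (with i ≤ n-2 and j ≤ n), P_i(a_0, ..., a_i, a_j) = b_i. -/
/-!
Pick any `a₀ ∈ S`. The remaining `|S| - 1` elements split into two classes according to the value
of `P₀(a₀, x)`; keeping the larger class (and recording its value as `b₀`) leaves at least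
`(|S| - 1) / 2` candidates, all of which already satisfy the constraint at index `0`. Recursing into
that class with the predicates `P_{i+1}(a₀, ·)`, a set of size `2^k` supports `k` halvings, hence a
sequence of `k + 1` elements.
-/

namespace LongChoice

variable {α : Type*}

theorem exists_bool_le_two_mul_card_filter (s : Finset α) (f : α → Bool) :
    ∃ β : Bool, s.card ≤ 2 * (s.filter fun x => f x = β).card := by
  have hsplit := s.card_filter_add_card_filter_not fun x => f x = true
  simp only [Bool.not_eq_true] at hsplit
  by_cases htrue : s.card ≤ 2 * (s.filter fun x => f x = true).card
  · exact ⟨true, htrue⟩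
  · exact ⟨false, by omega⟩

theorem exists_large_fiber_erase [DecidableEq α] {k : ℕ} {s : Finset α} (hs : 2 ^ (k + 1) ≤ s.card)
    (c : α) (f : α → Bool) :
    ∃ β : Bool, 2 ^ k ≤ ((s.erase c).filter fun x => f x = β).card := by
  obtain ⟨β, hβ⟩ := exists_bool_le_two_mul_card_filter (s.erase c) f
  refine ⟨β, ?_⟩
  have herase := Finset.pred_card_le_card_erase (s := s) (a := c)
  rw [pow_succ] at hs
  -- `2 ^ (k + 1) - 1` is odd, so halving it and rounding up gives `2 ^ k`
  omega

/-- `Stream' α` is by definition `ℕ → α`, so `Stream'.cons` prepends an element to a sequence. -/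
theorem fin_cons_comp_stream_cons (c : α) (a : ℕ → α) (i : ℕ) :
    (fun t : Fin (i + 2) => Stream'.cons c a t) = Fin.cons c fun t : Fin (i + 1) => a t := by
  funext t
  exact Fin.cases rfl (fun _ => rfl) t

theorem exists_bSequence_of_pow_le_card [DecidableEq α] (k : ℕ) {s : Finset α}
    (hs : 2 ^ k ≤ s.card) (P : (i : ℕ) → (Fin (i + 1) → α) → α → Bool) :
    ∃ (b : ℕ → Bool) (a : ℕ → α), (∀ j ≤ k, a j ∈ s) ∧
      (∀ i j, i < j → j ≤ k → a i ≠ a j) ∧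
      (∀ i j, i < j → j ≤ k → P i (fun t => a t) (a j) = b i) := by
  induction k generalizing s P with
  | zero =>
    obtain ⟨c, hc⟩ := Finset.card_pos.mp (lt_of_lt_of_le (Nat.two_pow_pos 0) hs)
    exact ⟨fun _ => true, fun _ => c, fun _ _ => hc, by omega, by omega⟩
  | succ k ih =>
    obtain ⟨c, hc⟩ := Finset.card_pos.mp (lt_of_lt_of_le (Nat.two_pow_pos _) hs)
    obtain ⟨β, hβ⟩ := exists_large_fiber_erase hs c (P 0 fun _ => c)
    obtain ⟨b, a, hmem, hne, hb⟩ := ih hβ fun i f x => P (i + 1) (Fin.cons c f) x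
    have hmem' : ∀ j ≤ k, a j ∈ s.erase c ∧ P 0 (fun _ => c) (a j) = β := fun j hj =>
      Finset.mem_filter.mp (hmem j hj)
    refine ⟨Stream'.cons β b, Stream'.cons c a, ?_, ?_, ?_⟩
    · rintro (_ | j) hj
      · exact hc
      · exact Finset.mem_of_mem_erase (hmem' j (by omega)).1
    · rintro (_ | i) (_ | j) hij hj
      · omega
      · exact (Finset.ne_of_mem_erase (hmem' j (by omega)).1).symm
      · omega
      · exact hne i j (by omega) (by omega)
    · rintro (_ | i) (_ | j) hij hj
      · omega
      · have hprefix : (fun t : Fin 1 => Stream'.cons c a t) = fun _ => c :=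
          funext fun t => by rw [Fin.fin_one_eq_zero t]; rfl
        rw [hprefix]
        exact (hmem' j (by omega)).2
      · omega
      · rw [fin_cons_comp_stream_cons]
        exact hb i j (by omega) (by omega)

end LongChoice

theorem long_choice_total_general (n : ℕ)
    (P : (i : ℕ) → (Fin (i + 1) → Fin (2 ^ n)) → Fin (2 ^ n) → Bool) :
    ∃ (b : ℕ → Bool) (a : ℕ → Fin (2 ^ n)),
      (∀ i j, i ≤ n → j ≤ n → i ≠ j → a i ≠ a j) ∧
      (∀ i j, i + 2 ≤ n → j ≤ n → i < j →
        P i (fun t => a t.val) (a j) = b i) := by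
  obtain ⟨b, a, -, hne, hb⟩ :=
    LongChoice.exists_bSequence_of_pow_le_card n (s := Finset.univ) (by simp) P
  refine ⟨b, a, fun i j hi hj hij => ?_, fun i j _ hj hij => hb i j hij hj⟩
  rcases hij.lt_or_gt with h | h
  · exact hne i j h hj
  · exact (hne j i h hi).symm

/-- Totality of the Long Choice problem: given predicates `P i` taking
`i+2` arguments from `Fin (2^n)`, there are bits `b 0, …, b (n-2)` and
pairwise distinct `a 0, …, a n` forming a `b`-sequence for `P`. -/
theorem long_choice_total (n : ℕ) (hn : 1 ≤ n)
    (P : (i : ℕ) → (Fin (i + 1) → Fin (2 ^ n)) → Fin (2 ^ n) → Bool) :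
    ∃ (b : ℕ → Bool) (a : ℕ → Fin (2 ^ n)),
      (∀ i j, i ≤ n → j ≤ n → i ≠ j → a i ≠ a j) ∧
      (∀ i j, i + 2 ≤ n → j ≤ n → i < j →
        P i (fun t => a t.val) (a j) = b i) :=
  long_choice_total_general n P
end

section
/- Let n ≥ 2 and let P_0, ..., P_{n-2} be functions where each P_i takes i+2 arguments from Fin (2^n - 2) and returns a Boolean. Then there exist k ≤ n-2, bits b_0, ..., b_k, and pairwise distinct elements a_0, ..., a_k ∈ Fin (2^n - 2) such that (a) P_i(a_0, ..., a_i, a_j) = b_i whenever i < j ≤ k, and (b) there is no a_{k+1} ∈ Fin (2^n - 2), distinct from a_0, ..., a_k, with P_i(a_0, ..., a_i, a_{k+1}) = b_i for all i ≤ k. -/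
open Finset

private lemma minority_bit {α : Type*} [DecidableEq α] (T : Finset α) (p : α → Bool) :
    ∃ β : Bool, ((T.filter fun z => p z = β).card) * 2 ≤ T.card := by
  have h := Finset.card_filter_add_card_filter_not (s := T) (p := fun z => p z = true)
  have he : T.filter (fun z => ¬ p z = true) = T.filter (fun z => p z = false) := by
    apply Finset.filter_congr; intro z _; simp
  rw [he] at h
  by_cases hc : (T.filter fun z => p z = true).card ≤ (T.filter fun z => p z = false).card
  · exact ⟨true, by omega⟩
  · exact ⟨false, by omega⟩

private lemma aux_short (n : ℕ)
    (P : (i : ℕ) → (Fin (i + 1) → Fin (2 ^ n - 2)) → Fin (2 ^ n - 2) → Bool) :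
    ∀ m k (b : ℕ → Bool) (a : ℕ → Fin (2 ^ n - 2)) (S : Finset (Fin (2 ^ n - 2))),
    (∀ i j, i ≤ k → j ≤ k → i ≠ j → a i ≠ a j) →
    (∀ i j, i < j → j ≤ k → P i (fun t => a t.val) (a j) = b i) →
    (∀ z, z ∈ S ↔ ((∀ t ≤ k, z ≠ a t) ∧ ∀ i ≤ k, P i (fun t => a t.val) z = b i)) →
    S.card + 2 ≤ 2 ^ m →
    ∃ k', k ≤ k' ∧ k' < k + m ∧
      ∃ (b' : ℕ → Bool) (a' : ℕ → Fin (2 ^ n - 2)),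
      (∀ i j, i ≤ k' → j ≤ k' → i ≠ j → a' i ≠ a' j) ∧
      (∀ i j, i < j → j ≤ k' → P i (fun t => a' t.val) (a' j) = b' i) ∧
      ¬ ∃ z : Fin (2 ^ n - 2), (∀ t ≤ k', z ≠ a' t) ∧
        (∀ i ≤ k', P i (fun t => a' t.val) z = b' i) := by
  intro m
  induction m with
  | zero => intro k b a S _ _ _ hcard; simp at hcard
  | succ m ih =>
    intro k b a S hdist hcons hmem hcard
    classical
    by_cases hSe : S = ∅
    · refine ⟨k, le_refl k, by omega, b, a, hdist, hcons, ?_⟩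
      rintro ⟨z, hz1, hz2⟩
      have : z ∈ S := (hmem z).mpr ⟨hz1, hz2⟩
      rw [hSe] at this; exact absurd this (Finset.notMem_empty z)
    · obtain ⟨x, hx⟩ := Finset.nonempty_iff_ne_empty.mpr hSe
      obtain ⟨hxne, hxP⟩ := (hmem x).mp hx
      set a' : ℕ → Fin (2 ^ n - 2) := fun t => if t = k + 1 then x else a t with ha'
      obtain ⟨β, hβ⟩ := minority_bit (S.erase x)
        (fun z => P (k + 1) (fun t => a' t.val) z)
      set b' : ℕ → Bool := fun i => if i = k + 1 then β else b i with hb'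
      have hrestr : ∀ i, i ≤ k → (fun t : Fin (i+1) => a' t.val) = (fun t => a t.val) := by
        intro i hi
        funext t
        have ht : (t.val : ℕ) ≠ k + 1 := by omega
        simp [ha', ht]
      have hdist' : ∀ i j, i ≤ k + 1 → j ≤ k + 1 → i ≠ j → a' i ≠ a' j := by
        intro i j hi hj hij
        rcases Nat.lt_or_ge i (k+1) with hi' | hi' <;>
          rcases Nat.lt_or_ge j (k+1) with hj' | hj'
        · have : a i ≠ a j := hdist i j (by omega) (by omega) hij
          simpa [ha', Nat.ne_of_lt hi', Nat.ne_of_lt hj'] using this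
        · have hj'' : j = k + 1 := by omega
          have hne := hxne i (by omega)
          simp only [ha', hj'', if_neg (Nat.ne_of_lt hi'), if_pos rfl]
          exact fun h => hne h.symm
        · have hi'' : i = k + 1 := by omega
          have hne := hxne j (by omega)
          simp only [ha', hi'', if_neg (Nat.ne_of_lt hj'), if_pos rfl]
          exact hne
        · omega
      have hcons' : ∀ i j, i < j → j ≤ k + 1 → P i (fun t => a' t.val) (a' j) = b' i := by
        intro i j hij hj
        have hi : i ≤ k := by omega
        rw [hrestr i hi]
        have hbi : b' i = b i := by simp only [hb']; rw [if_neg (by omega)]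
        rcases Nat.lt_or_ge j (k+1) with hj' | hj'
        · have haj : a' j = a j := by simp [ha', Nat.ne_of_lt hj']
          rw [haj, hbi]
          exact hcons i j hij (by omega)
        · have hj'' : j = k + 1 := by omega
          have haj : a' j = x := by simp [ha', hj'']
          rw [haj, hbi]
          exact hxP i hi
      set S' := (S.erase x).filter (fun z => P (k + 1) (fun t => a' t.val) z = β) with hS'
      have hmem' : ∀ z, z ∈ S' ↔ ((∀ t ≤ k + 1, z ≠ a' t) ∧
          ∀ i ≤ k + 1, P i (fun t => a' t.val) z = b' i) := by
        intro z
        rw [hS', Finset.mem_filter, Finset.mem_erase, hmem z]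
        constructor
        · rintro ⟨⟨hzx, hz1, hz2⟩, hzβ⟩
          constructor
          · intro t ht
            rcases Nat.lt_or_ge t (k+1) with ht' | ht'
            · simpa [ha', Nat.ne_of_lt ht'] using hz1 t (by omega)
            · have : t = k + 1 := by omega
              simpa [ha', this] using hzx
          · intro i hi
            rcases Nat.lt_or_ge i (k+1) with hi' | hi'
            · have hik : i ≤ k := by omega
              rw [hrestr i hik]
              have : b' i = b i := by simp only [hb']; rw [if_neg (by omega)]
              rw [this]
              exact hz2 i hik
            · have : i = k + 1 := by omega
              subst this
              simpa [hb'] using hzβ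
        · rintro ⟨hz1, hz2⟩
          have hzx : z ≠ x := by simpa [ha'] using hz1 (k+1) le_rfl
          refine ⟨⟨hzx, fun t ht => ?_, fun i hi => ?_⟩, ?_⟩
          · simpa [ha', show t ≠ k + 1 by omega] using hz1 t (by omega)
          · have := hz2 i (by omega)
            rw [hrestr i hi] at this
            rw [this]
            simp only [hb']; rw [if_neg (by omega)]
          · simpa [hb'] using hz2 (k+1) le_rfl
      have hScard : 1 ≤ S.card := Finset.card_pos.mpr ⟨x, hx⟩
      have herase : (S.erase x).card = S.card - 1 := Finset.card_erase_of_mem hx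
      have hS'card : S'.card + 2 ≤ 2 ^ m := by
        have h1 : S'.card ≤ S.card - 1 := by
          have := Finset.card_filter_le (S.erase x)
            (fun z => P (k + 1) (fun t => a' t.val) z = β)
          omega
        have h2 : 2 ^ (m+1) = 2 * 2 ^ m := by ring
        have h3 : S'.card * 2 ≤ (S.erase x).card := hβ
        omega
      obtain ⟨k', hk'1, hk'2, rest⟩ := ih (k+1) b' a' S' hdist' hcons' hmem' hS'card
      exact ⟨k', by omega, by omega, rest⟩

/-- Totality of the Short Choice problem: over the universe `Fin (2^n - 2)`
some `b`-sequence `a 0, …, a k` with `k ≤ n-2` is maximal, i.e. it cannot be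
extended by one more element consistently with one more bit `b k`. -/
theorem short_choice_total (n : ℕ) (hn : 2 ≤ n)
    (P : (i : ℕ) → (Fin (i + 1) → Fin (2 ^ n - 2)) → Fin (2 ^ n - 2) → Bool) :
    ∃ (k : ℕ), k ≤ n - 2 ∧
    ∃ (b : ℕ → Bool) (a : ℕ → Fin (2 ^ n - 2)),
      (∀ i j, i ≤ k → j ≤ k → i ≠ j → a i ≠ a j) ∧
      (∀ i j, i < j → j ≤ k → P i (fun t => a t.val) (a j) = b i) ∧
      ¬ ∃ z : Fin (2 ^ n - 2), (∀ t ≤ k, z ≠ a t) ∧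
        (∀ i ≤ k, P i (fun t => a t.val) z = b i) := by
  classical
  have hN : 2 ≤ 2 ^ n - 2 := by
    have : 4 ≤ 2 ^ n := by
      calc 4 = 2 ^ 2 := by norm_num
      _ ≤ 2 ^ n := Nat.pow_le_pow_right (by norm_num) hn
    omega
  have hNpos : 0 < 2 ^ n - 2 := by omega
  set a0 : Fin (2 ^ n - 2) := ⟨0, hNpos⟩ with ha0
  set a : ℕ → Fin (2 ^ n - 2) := fun _ => a0 with ha
  obtain ⟨β, hβ⟩ := minority_bit ((Finset.univ : Finset (Fin (2^n-2))).erase a0)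
    (fun z => P 0 (fun t => a t.val) z)
  set b : ℕ → Bool := fun _ => β with hb
  set S := ((Finset.univ : Finset (Fin (2^n-2))).erase a0).filter
      (fun z => P 0 (fun t => a t.val) z = β) with hS
  have hmem : ∀ z, z ∈ S ↔ ((∀ t ≤ 0, z ≠ a t) ∧
      ∀ i ≤ 0, P i (fun t => a t.val) z = b i) := by
    intro z
    rw [hS, Finset.mem_filter, Finset.mem_erase]
    constructor
    · rintro ⟨⟨hz1, -⟩, hz2⟩
      refine ⟨fun t ht => ?_, fun i hi => ?_⟩
      · have : t = 0 := by omega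
        subst this; exact hz1
      · have : i = 0 := by omega
        subst this; simpa [hb] using hz2
    · rintro ⟨hz1, hz2⟩
      exact ⟨⟨hz1 0 le_rfl, Finset.mem_univ z⟩, by simpa [hb] using hz2 0 le_rfl⟩
  have hcards : S.card + 2 ≤ 2 ^ (n - 1) := by
    have h2 : ((Finset.univ : Finset (Fin (2^n-2))).erase a0).card = 2 ^ n - 2 - 1 := by
      rw [Finset.card_erase_of_mem (Finset.mem_univ a0), Finset.card_univ, Fintype.card_fin]
    have h3 : 2 ^ n = 2 * 2 ^ (n - 1) := by
      rw [← pow_succ']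
      congr 1
      omega
    omega
  obtain ⟨k', hk'1, hk'2, rest⟩ := aux_short n P (n - 1) 0 b a S
    (by intro i j hi hj hij; omega)
    (by intro i j hij hj; omega)
    hmem hcards
  exact ⟨k', by omega, rest⟩
end

section
/- Let n ≥ 2 and let c be a 2-coloring of the unordered pairs of elements of Fin (2^{n+1}). Suppose b_0, ..., b_{n-2} ∈ Bool and a_0, ..., a_n are distinct elements of Fin (2^{n+1}) such that for every i < n-1 and every j with i < j ≤ n, the edge {a_i, a_j} has color b_i. Then there is a set of at least ⌈(n+1)/2⌉ vertices all of whose internal edges have the same color. -/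
/-- Correctness of the reduction from Ramsey to Weak Long Choice: from a
`b`-sequence for the colouring predicates one extracts a monochromatic set
of size at least `⌈(n+1)/2⌉`. -/
theorem ramsey_from_b_sequence (n : ℕ) (hn : 2 ≤ n)
    (c : Sym2 (Fin (2 ^ (n + 1))) → Bool)
    (b : ℕ → Bool) (a : ℕ → Fin (2 ^ (n + 1)))
    (hdist : ∀ i j, i ≤ n → j ≤ n → i ≠ j → a i ≠ a j)
    (hseq : ∀ i j, i + 1 < n → i < j → j ≤ n → c s(a i, a j) = b i) :
    ∃ (T : Finset (Fin (2 ^ (n + 1)))) (col : Bool),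
      (n + 2) / 2 ≤ T.card ∧
      ∀ x ∈ T, ∀ y ∈ T, x ≠ y → c s(x, y) = col := by
  set I := Finset.range (n - 1) with hI
  have hcard : ((I.filter (fun i => b i = true)).card
      + (I.filter (fun i => b i = false)).card) = n - 1 := by
    have h := Finset.card_filter_add_card_filter_not (s := I)
      (p := fun i => b i = true)
    have heq : I.filter (fun i => ¬ b i = true) = I.filter (fun i => b i = false) := by
      apply Finset.filter_congr
      intro i _
      simp [Bool.not_eq_true]
    rw [heq] at h
    simpa [hI] using h
  obtain ⟨col, hmaj⟩ : ∃ col, n / 2 ≤ (I.filter (fun i => b i = col)).card := by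
    by_contra h
    push_neg at h
    have h1 := h true
    have h2 := h false
    omega
  set S := I.filter (fun i => b i = col) with hSdef
  have hS_lt : ∀ i ∈ S, i < n - 1 := fun i hi =>
    Finset.mem_range.mp (Finset.mem_filter.mp hi).1
  have hSb : ∀ i ∈ S, b i = col := fun i hi => (Finset.mem_filter.mp hi).2
  have key : ∀ i ∈ S, ∀ j, i < j → j ≤ n → c s(a i, a j) = col := by
    intro i hi j hij hjn
    rw [hseq i j (by have := hS_lt i hi; omega) hij hjn]
    exact hSb i hi
  refine ⟨insert (a n) (S.image a), col, ?_, ?_⟩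
  · have hnotmem : a n ∉ S.image a := by
      intro h
      obtain ⟨i, hi, hia⟩ := Finset.mem_image.mp h
      exact hdist i n (by have := hS_lt i hi; omega) le_rfl
        (by have := hS_lt i hi; omega) hia
    rw [Finset.card_insert_of_notMem hnotmem, Finset.card_image_of_injOn]
    · omega
    · intro i hi j hj hij
      by_contra hne
      exact hdist i j (by have := hS_lt i hi; omega)
        (by have := hS_lt j hj; omega) hne hij
  · intro x hx y hy hxy
    rw [Finset.mem_insert, Finset.mem_image] at hx hy
    rcases hx with rfl | ⟨i, hi, rfl⟩ <;> rcases hy with rfl | ⟨j, hj, rfl⟩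
    · exact absurd rfl hxy
    · rw [Sym2.eq_swap]
      exact key j hj n (by have := hS_lt j hj; omega) le_rfl
    · exact key i hi n (by have := hS_lt i hi; omega) le_rfl
    · rcases lt_trichotomy i j with hlt | rfl | hlt
      · exact key i hi j hlt (by have := hS_lt j hj; omega)
      · exact absurd rfl hxy
      · rw [Sym2.eq_swap]
        exact key j hj i hlt (by have := hS_lt i hi; omega)
end
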